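/- With B and ψ the relativised collapsing hierarchy: for every ordinal γ, ψ(γ+1) ≤ (ψ γ)^Γ, where δ^Γ denotes the least strongly critical ordinal strictly greater than δ. -/

import Mathlib

open Ordinal

/-- The binary Veblen function: `veblen 0 β = ω ^ β`, and for `α > 0`,
`veblen α` enumerates the common fixed points of `veblen γ` for `γ < α`. -/
noncomputable def veblen : Ordinal → Ordinal → Ordinal :=
  WellFounded.fix Ordinal.lt_wf
    (fun α ih => if α = 0 then fun β => omega0 ^ β
      else derivFamily.{0,0} (familyOfBFamily α (fun ξ h => ih ξ h)))

/-- The set of strongly critical ordinals. -/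
def StronglyCritical (γ : Ordinal) : Prop := _root_.veblen γ 0 = γ

/-- `Gamma β` is the `β`-th strongly critical ordinal. -/
noncomputable def Gamma : Ordinal → Ordinal :=
  enumOrd {γ | StronglyCritical γ}

/-- The least uncountable cardinal (as an ordinal) greater than `θ`. -/
noncomputable def OmegaB (θ : Ordinal) : Ordinal :=
  sInf {o | θ < o ∧ o.card.ord = o ∧ Cardinal.aleph0 < o.card}

/-- Closure of `{0, Ω} ∪ {Γ_β : β ≤ θ}` under `+`, `veblen` and the
given partial collapsing function `f` on arguments below `α`. -/
def closB (θ α : Ordinal) (f : ∀ ξ, ξ < α → Ordinal) : Set Ordinal :=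
  ⋂₀ {S : Set Ordinal |
      0 ∈ S ∧ OmegaB θ ∈ S ∧ (∀ β ≤ θ, Gamma β ∈ S) ∧
      (∀ x ∈ S, ∀ y ∈ S, x + y ∈ S) ∧
      (∀ x ∈ S, ∀ y ∈ S, _root_.veblen x y ∈ S) ∧
      (∀ ξ (h : ξ < α), ξ ∈ S → f ξ h ∈ S)}

/-- The relativised collapsing function `ψ_θ`. -/
noncomputable def psiB (θ : Ordinal) : Ordinal → Ordinal :=
  WellFounded.fix Ordinal.lt_wf
    (fun α ih => sInf {β | β ∉ closB θ α (fun ξ h => ih ξ h)})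

/-- The relativised collapsing hierarchy `B_θ(α)`. -/
def BB (θ α : Ordinal) : Set Ordinal :=
  closB θ α (fun ξ _ => psiB θ ξ)

/-- The least strongly critical ordinal strictly above `δ`. -/
noncomputable def gammaSucc (δ : Ordinal) : Ordinal :=
  sInf {γ | δ < γ ∧ StronglyCritical γ}

/-! Write `Λ` for the least strongly critical ordinal above `ψ γ`. It suffices that `Λ ∉ B(γ + 1)`,
i.e. that the ordinals other than `Λ` contain the generators and are closed under the operations.
Being strongly critical, `Λ` is closed under `+` and `φ`, both of which are bounded below by their
arguments, so neither produces `Λ` from ordinals `≠ Λ`. Every ordinal below `Γ_θ` is generated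
from `0` and the `Γ_β` (`β < θ`) by `+` and `φ`, so `Γ_θ ≤ ψ γ < Λ`; likewise `ψ ξ ≤ ψ γ < Λ`
for `ξ ≤ γ`. Finally `Ω` is a regular uncountable cardinal, so it is closed under `φ` and
cannot be the least strongly critical ordinal above an ordinal below it. -/

open Set
open scoped Cardinal

namespace Ordinal

/- Mathlib indexes this family by `Iio α`, which lives one universe up; the `α.ToType` indexing
is the one `Cardinal.derivFamily_lt_ord` accepts. -/
set_option linter.deprecated false in
theorem veblen_eq_derivFamily_toType {α : Ordinal} (h : α ≠ 0) :
    veblen α = derivFamily (familyOfBFamily α fun ξ _ => veblen ξ) := by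
  rw [veblen_of_ne_zero h, derivFamily_eq_enumOrd (fun _ => isNormal_veblen _),
    derivFamily_eq_enumOrd (f := familyOfBFamily α fun ξ _ => veblen ξ) (fun _ => isNormal_veblen _),
    ← biInter_range (g := Function.fixedPoints), ← biInter_range (g := Function.fixedPoints),
    range_familyOfBFamily]
  congr 2
  ext f
  simp [brange]

theorem ne_of_isPrincipal {op : Ordinal → Ordinal → Ordinal} {t x y : Ordinal}
    (hleft : x ≤ op x y) (hright : y ≤ op x y) (ht : IsPrincipal op t) (hx : x ≠ t) (hy : y ≠ t) :
    op x y ≠ t := by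
  rcases hx.lt_or_gt with hx | hx
  · rcases hy.lt_or_gt with hy | hy
    · exact (ht hx hy).ne
    · exact (hy.trans_le hright).ne'
  · exact (hx.trans_le hleft).ne'

theorem isPrincipal_add_of_veblen_zero_eq {t : Ordinal} (ht : veblen t 0 = t) :
    IsPrincipal (· + ·) t := by
  obtain ⟨e, he⟩ := ht ▸ veblen_mem_range_opow t 0
  exact he ▸ isPrincipal_add_omega0_opow e

theorem isPrincipal_veblen_of_veblen_zero_eq {t : Ordinal} (ht : veblen t 0 = t) :
    IsPrincipal veblen t := fun x y hx hy =>
  calc veblen x y < veblen x t := veblen_right_strictMono x hy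
    _ = t := by rw [← ht, veblen_veblen_of_lt (ht.symm ▸ hx)]

/- If `δ` is additively principal, `δ = ω ^ e = veblen (invVeblen₁ e) (invVeblen₂ e)`, and
`invVeblen₁ e < δ` fails only when `δ = e` is strongly critical. -/
theorem exists_lt_add_eq_or_veblen_eq {δ : Ordinal} (h0 : δ ≠ 0) (hΓ : δ ∉ range Γ_) :
    ∃ x < δ, ∃ y < δ, x + y = δ ∨ veblen x y = δ := by
  by_cases hδ : IsPrincipal (· + ·) δ
  · obtain ⟨e, rfl⟩ : ∃ e, ω ^ e = δ :=
      (isPrincipal_add_iff_zero_or_omega0_opow.1 hδ).resolve_left h0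
    have he : e ≤ ω ^ e := right_le_opow e one_lt_omega0
    refine ⟨invVeblen₁ e, ?_, invVeblen₂ e, invVeblen₂_lt e, Or.inr (veblen_invVeblen₁_invVeblen₂ e)⟩
    rcases he.lt_or_eq with he | he
    · exact (invVeblen₁_le e).trans_lt he
    · rw [← he] at h0 hΓ ⊢
      exact invVeblen₁_lt_iff.2 ⟨h0, hΓ⟩
  · obtain ⟨x, hx, y, hy, hxy⟩ := exists_lt_add_of_not_isPrincipal_add hδ
    exact ⟨x, hx, y, hy, Or.inl hxy⟩

theorem Iio_gamma_subset {S : Set Ordinal} {θ : Ordinal} (h0 : 0 ∈ S)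
    (hadd : ∀ x ∈ S, ∀ y ∈ S, x + y ∈ S) (hveblen : ∀ x ∈ S, ∀ y ∈ S, veblen x y ∈ S)
    (hΓ : ∀ β < θ, Γ_ β ∈ S) : Iio (Γ_ θ) ⊆ S := by
  intro δ
  induction δ using WellFoundedLT.induction with
  | _ δ ih =>
  intro hδ
  by_cases hδ0 : δ = 0
  · exact hδ0 ▸ h0
  by_cases hδΓ : δ ∈ range Γ_
  · obtain ⟨β, rfl⟩ := hδΓ
    exact hΓ β (gamma_lt_gamma.1 hδ)
  obtain ⟨x, hx, y, hy, hxy | hxy⟩ := exists_lt_add_eq_or_veblen_eq hδ0 hδΓ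
  · exact hxy ▸ hadd x (ih x hx (hx.trans hδ)) y (ih y hy (hy.trans hδ))
  · exact hxy ▸ hveblen x (ih x hx (hx.trans hδ)) y (ih y hy (hy.trans hδ))

theorem veblen_lt_ord {c : Cardinal} (hc : c.IsRegular) (hc' : c ≠ ℵ₀)
    {x y : Ordinal} (hx : x < c.ord) (hy : y < c.ord) : veblen x y < c.ord := by
  have hω : ℵ₀ < c := hc.aleph0_le.lt_of_ne hc'.symm
  induction x using WellFoundedLT.induction generalizing y with
  | _ x ih =>
  rcases eq_or_ne x 0 with rfl | hx0
  · rw [veblen_zero_apply, Cardinal.lt_ord]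
    refine (card_opow_le _ _).trans_lt (max_lt hω (max_lt ?_ (Cardinal.lt_ord.1 hy)))
    rw [card_omega0]; exact hω
  · have htypein (i : x.ToType) : typein (α := x.ToType) (· < ·) i < x :=
      (typein_lt_type _ i).trans_eq (type_toType x)
    rw [veblen_eq_derivFamily_toType hx0]
    exact Cardinal.derivFamily_lt_ord hc (by rw [Cardinal.mk_toType, ← Cardinal.lt_ord]; exact hx) hc'
      (fun i b hb => ih _ (htypein i) ((htypein i).trans hx) hb) hy

end Ordinal

theorem veblen_eq_ordinalVeblen : _root_.veblen = Ordinal.veblen := by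
  funext α
  induction α using WellFoundedLT.induction with
  | _ α ih =>
  rw [_root_.veblen, WellFounded.fix_eq, ← _root_.veblen]
  split_ifs with h0
  · rw [h0, Ordinal.veblen_zero]
  · rw [Ordinal.veblen_eq_derivFamily_toType h0]
    congr; funext ξ hξ; exact ih ξ hξ

theorem stronglyCritical_iff {t : Ordinal} : StronglyCritical t ↔ Ordinal.veblen t 0 = t := by
  rw [StronglyCritical, veblen_eq_ordinalVeblen]

theorem Gamma_eq_gamma : Gamma = Γ_ := by
  have hrange : {γ | StronglyCritical γ} = range Γ_ :=
    ext fun _ => stronglyCritical_iff.trans mem_range_gamma.symm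
  rw [Gamma, hrange, enumOrd_range strictMono_gamma]

theorem OmegaB_eq (θ : Ordinal) :
    OmegaB θ = (Order.succ (max ℵ₀ θ.card)).ord := by
  set κ := Order.succ (max ℵ₀ θ.card)
  have hθκ : θ.card < κ := (le_max_right _ _).trans_lt (Order.lt_succ _)
  have hκ : κ.ord ∈ {o | θ < o ∧ o.card.ord = o ∧ ℵ₀ < o.card} := by
    refine ⟨Cardinal.lt_ord.2 hθκ, ?_, ?_⟩ <;> rw [Cardinal.card_ord]
    exact (le_max_left _ _).trans_lt (Order.lt_succ _)
  refine le_antisymm (csInf_le' hκ) (le_csInf ⟨_, hκ⟩ ?_)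
  rintro o ⟨hθo, ho, hωo⟩
  have hθo' : θ.card < o.card := by
    by_contra! h
    exact hθo.not_ge (ho ▸ (Cardinal.ord_le_ord.2 h).trans (Cardinal.ord_card_le θ))
  exact ho ▸ Cardinal.ord_le_ord.2 (Order.succ_le_of_lt (max_lt hωo hθo'))

theorem stronglyCritical_nfp_veblen (a : Ordinal) :
    StronglyCritical (nfp (Ordinal.veblen · 0) a) :=
  stronglyCritical_iff.2 (nfp_fp isNormal_veblen_zero a)

theorem lt_nfp_veblen_succ (δ : Ordinal) : δ < nfp (Ordinal.veblen · 0) (Order.succ δ) :=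
  (Order.lt_succ δ).trans_le (le_nfp _ _)

theorem gammaSucc_le {δ μ : Ordinal} (h : δ < μ) (hμ : StronglyCritical μ) : gammaSucc δ ≤ μ :=
  csInf_le' ⟨h, hμ⟩

theorem lt_gammaSucc_and_stronglyCritical (δ : Ordinal) :
    δ < gammaSucc δ ∧ StronglyCritical (gammaSucc δ) :=
  csInf_mem (s := {γ | δ < γ ∧ StronglyCritical γ})
    ⟨_, lt_nfp_veblen_succ δ, stronglyCritical_nfp_veblen _⟩

theorem gammaSucc_lt_ord {c : Cardinal} (hc : c.IsRegular) (hc' : c ≠ ℵ₀)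
    {δ : Ordinal} (hδ : δ < c.ord) : gammaSucc δ < c.ord :=
  (gammaSucc_le (lt_nfp_veblen_succ δ) (stronglyCritical_nfp_veblen _)).trans_lt <|
    Cardinal.nfp_lt_ord_of_isRegular hc hc' (fun _ hx => veblen_lt_ord hc hc' hx (zero_le.trans_lt hδ))
      ((Cardinal.isSuccLimit_ord hc.aleph0_le).succ_lt hδ)

theorem gammaSucc_ne_OmegaB (θ δ : Ordinal) : gammaSucc δ ≠ OmegaB θ := by
  rcases lt_or_ge δ (OmegaB θ) with h | h
  · rw [OmegaB_eq] at h ⊢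
    have hω : ℵ₀ < Order.succ (max ℵ₀ θ.card) :=
      (le_max_left _ _).trans_lt (Order.lt_succ _)
    exact (gammaSucc_lt_ord (Cardinal.isRegular_succ (le_max_left _ _)) hω.ne' h).ne
  · exact (h.trans_lt (lt_gammaSucc_and_stronglyCritical δ).1).ne'

section closB

variable {θ α : Ordinal} {f : ∀ ξ, ξ < α → Ordinal}

theorem closB_subset {S : Set Ordinal} (h0 : 0 ∈ S) (hΩ : OmegaB θ ∈ S)
    (hΓ : ∀ β ≤ θ, Γ_ β ∈ S) (hadd : ∀ x ∈ S, ∀ y ∈ S, x + y ∈ S)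
    (hveblen : ∀ x ∈ S, ∀ y ∈ S, Ordinal.veblen x y ∈ S)
    (hf : ∀ ξ (h : ξ < α), ξ ∈ S → f ξ h ∈ S) : closB θ α f ⊆ S :=
  sInter_subset_of_mem ⟨h0, hΩ, Gamma_eq_gamma ▸ hΓ, hadd, veblen_eq_ordinalVeblen ▸ hveblen, hf⟩

theorem zero_mem_closB : 0 ∈ closB θ α f :=
  mem_sInter.2 fun _ hS => hS.1

theorem gamma_mem_closB {β : Ordinal} (hβ : β ≤ θ) : Γ_ β ∈ closB θ α f :=
  mem_sInter.2 fun _ hS => Gamma_eq_gamma ▸ hS.2.2.1 β hβ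

theorem add_mem_closB {x y : Ordinal} (hx : x ∈ closB θ α f) (hy : y ∈ closB θ α f) :
    x + y ∈ closB θ α f :=
  mem_sInter.2 fun S hS => hS.2.2.2.1 x (mem_sInter.1 hx S hS) y (mem_sInter.1 hy S hS)

theorem veblen_mem_closB {x y : Ordinal} (hx : x ∈ closB θ α f) (hy : y ∈ closB θ α f) :
    Ordinal.veblen x y ∈ closB θ α f :=
  veblen_eq_ordinalVeblen ▸
    mem_sInter.2 fun S hS => hS.2.2.2.2.1 x (mem_sInter.1 hx S hS) y (mem_sInter.1 hy S hS)

theorem Iio_gamma_subset_closB : Iio (Γ_ θ) ⊆ closB θ α f :=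
  Iio_gamma_subset zero_mem_closB (fun _ hx _ hy => add_mem_closB hx hy)
    (fun _ hx _ hy => veblen_mem_closB hx hy) (fun _ hβ => gamma_mem_closB hβ.le)

end closB

theorem psiB_eq_sInf (θ α : Ordinal) : psiB θ α = sInf (BB θ α)ᶜ :=
  WellFounded.fix_eq _ _ α

theorem BB_mono (θ : Ordinal) : Monotone (BB θ) := fun _ _ h =>
  sInter_subset_sInter fun _ ⟨h0, hΩ, hΓ, hadd, hveblen, hψ⟩ =>
    ⟨h0, hΩ, hΓ, hadd, hveblen, fun ξ hξ => hψ ξ (hξ.trans_le h)⟩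

theorem psiB_le_psiB {θ ξ α : Ordinal} (h : ξ ≤ α) (hne : (BB θ α)ᶜ.Nonempty) :
    psiB θ ξ ≤ psiB θ α := by
  rw [psiB_eq_sInf, psiB_eq_sInf]
  exact csInf_le_csInf (OrderBot.bddBelow _) hne (compl_subset_compl.2 (BB_mono θ h))

theorem gamma_le_psiB {θ α : Ordinal} (hne : (BB θ α)ᶜ.Nonempty) : Γ_ θ ≤ psiB θ α := by
  rw [psiB_eq_sInf]
  exact le_csInf hne fun β hβ => not_lt.1 fun h => hβ (Iio_gamma_subset_closB h)

theorem gammaSucc_psiB_notMem_BB {θ γ : Ordinal} (hne : (BB θ γ)ᶜ.Nonempty) :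
    gammaSucc (psiB θ γ) ∉ BB θ (γ + 1) := by
  obtain ⟨hlt, hΛ⟩ := lt_gammaSucc_and_stronglyCritical (psiB θ γ)
  rw [stronglyCritical_iff] at hΛ
  have hsub : BB θ (γ + 1) ⊆ {x | x ≠ gammaSucc (psiB θ γ)} := closB_subset
    (pos_of_gt hlt).ne
    (gammaSucc_ne_OmegaB θ _).symm
    (fun β hβ => (((monotone_gamma hβ).trans (gamma_le_psiB hne)).trans_lt hlt).ne)
    (fun x hx y hy => ne_of_isPrincipal le_self_add le_add_self
      (isPrincipal_add_of_veblen_zero_eq hΛ) hx hy)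
    (fun x hx y hy => ne_of_isPrincipal (left_le_veblen x y) (right_le_veblen x y)
      (isPrincipal_veblen_of_veblen_zero_eq hΛ) hx hy)
    (fun ξ hξ _ => ((psiB_le_psiB (Order.lt_add_one_iff.1 hξ) hne).trans_lt hlt).ne)
  exact fun h => hsub h rfl

theorem stmt13 (θ γ : Ordinal) :
    psiB θ (γ + 1) ≤ gammaSucc (psiB θ γ) := by
  rcases (BB θ γ)ᶜ.eq_empty_or_nonempty with hempty | hne
  · -- `ψ (γ + 1)` is then the junk value `sInf ∅ = 0`.
    have hempty' : (BB θ (γ + 1))ᶜ = ∅ :=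
      subset_empty_iff.1 (hempty ▸ compl_subset_compl.2 (BB_mono θ le_self_add))
    rw [psiB_eq_sInf, hempty', Ordinal.sInf_empty]
    exact zero_le
  · rw [psiB_eq_sInf]
    exact csInf_le' (gammaSucc_psiB_notMem_BB hne)
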